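/- For a topological space (X, 𝒯), the following are equivalent: (a) (X, 𝒯) is para-S-closed; (b) every cover of X by regular closed sets of (X, 𝒯) has a locally finite refinement consisting of regular closed sets of (X, 𝒯); (c) every cover of X by regular closed sets of (X, 𝒯^α) has a locally finite refinement consisting of regular closed sets of (X, 𝒯^α); (d) (X, 𝒯^α) is para-S-closed. -/

import Mathlib

open Set TopologicalSpace

universe u v

variable {X : Type u} {Y : Type v}

/-- A set is an α-set (α-open) w.r.t. the topology `T` if `A ⊆ Int (Cl (Int A))`. -/
def AlphaOpen (T : TopologicalSpace X) (A : Set X) : Prop :=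
  letI := T
  A ⊆ interior (closure (interior A))

/-- The α-topology `𝒯^α`, whose open sets are exactly the α-sets of `T`. -/
def alphaTop (T : TopologicalSpace X) : TopologicalSpace X :=
  letI := T
  { IsOpen := fun A => A ⊆ interior (closure (interior A))
    isOpen_univ := by simp
    isOpen_inter := by
      intro A B hA hB
      have hsub : interior (closure (interior A)) ∩ interior (closure (interior B)) ⊆
          closure (interior (A ∩ B)) := by
        intro x hx
        have h1 : interior (closure (interior B)) ∩ closure (interior A) ⊆
            closure (interior (closure (interior B)) ∩ interior A) :=
          isOpen_interior.inter_closure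
        have h2 : interior (closure (interior B)) ∩ interior A ⊆
            closure (interior A ∩ interior B) := by
          intro y hy
          have h : interior A ∩ closure (interior B) ⊆ closure (interior A ∩ interior B) :=
            isOpen_interior.inter_closure
          exact h ⟨hy.2, interior_subset hy.1⟩
        have h3 : closure (interior (closure (interior B)) ∩ interior A) ⊆
            closure (interior A ∩ interior B) := by
          calc closure (interior (closure (interior B)) ∩ interior A)
              ⊆ closure (closure (interior A ∩ interior B)) := closure_mono h2
            _ = closure (interior A ∩ interior B) := closure_closure
        have hx' : x ∈ closure (interior A ∩ interior B) :=
          h3 (h1 ⟨hx.2, interior_subset hx.1⟩)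
        rwa [← interior_inter] at hx'
      intro x hx
      exact interior_maximal hsub (isOpen_interior.inter isOpen_interior) ⟨hA hx.1, hB hx.2⟩
    isOpen_sUnion := by
      intro S hS x hx
      obtain ⟨t, htS, hxt⟩ := hx
      have h : interior (closure (interior t)) ⊆ interior (closure (interior (⋃₀ S))) :=
        interior_mono (closure_mono (interior_mono (subset_sUnion_of_mem htS)))
      exact h (hS t htS hxt) }

/-- `A` is semi-open w.r.t. `T` if `A ⊆ Cl (Int A)`. -/
def SemiOpen (T : TopologicalSpace X) (A : Set X) : Prop :=
  letI := T
  A ⊆ closure (interior A)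

/-- `A` is semi-closed if its complement is semi-open. -/
def SemiClosed (T : TopologicalSpace X) (A : Set X) : Prop :=
  SemiOpen T Aᶜ

/-- The semi-closure of `A`: the intersection of all semi-closed sets containing `A`. -/
def sCl (T : TopologicalSpace X) (A : Set X) : Set X :=
  ⋂₀ {C | SemiClosed T C ∧ A ⊆ C}

/-- `A` is sg-closed if `sCl A ⊆ U` whenever `A ⊆ U` with `U` semi-open. -/
def SgClosed (T : TopologicalSpace X) (A : Set X) : Prop :=
  ∀ U : Set X, SemiOpen T U → A ⊆ U → sCl T A ⊆ U

/-- `A` is sg-open if its complement is sg-closed. -/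
def SgOpen (T : TopologicalSpace X) (A : Set X) : Prop :=
  SgClosed T Aᶜ

/-- `A` is regular closed w.r.t. `T` if `A = Cl (Int A)`. -/
def RegClosed (T : TopologicalSpace X) (A : Set X) : Prop :=
  letI := T
  A = closure (interior A)

/-- A family `𝒱` refines a family `𝒰` if every member of `𝒱` is contained in a member of `𝒰`. -/
def Refines (𝒱 𝒰 : Set (Set X)) : Prop :=
  ∀ V ∈ 𝒱, ∃ U ∈ 𝒰, V ⊆ U

/-- A family of sets is locally finite if every point has a neighbourhood
meeting only finitely many members. -/
def LocFinite (T : TopologicalSpace X) (𝒱 : Set (Set X)) : Prop :=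
  ∀ x : X, ∃ N ∈ @nhds X T x, {V ∈ 𝒱 | (V ∩ N).Nonempty}.Finite

/-- A family of sets is locally countable if every point has a neighbourhood
meeting only countably many members. -/
def LocCountable (T : TopologicalSpace X) (𝒱 : Set (Set X)) : Prop :=
  ∀ x : X, ∃ N ∈ @nhds X T x, {V ∈ 𝒱 | (V ∩ N).Nonempty}.Countable

/-- A family of sets is discrete if every point has a neighbourhood
meeting at most one member. -/
def DiscreteFam (T : TopologicalSpace X) (𝒱 : Set (Set X)) : Prop :=
  ∀ x : X, ∃ N ∈ @nhds X T x, {V ∈ 𝒱 | (V ∩ N).Nonempty}.Subsingleton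

/-- A family is σ-discrete if it is a countable union of discrete families. -/
def SigmaDiscrete (T : TopologicalSpace X) (𝒱 : Set (Set X)) : Prop :=
  ∃ 𝒲 : ℕ → Set (Set X), 𝒱 = ⋃ n, 𝒲 n ∧ ∀ n, DiscreteFam T (𝒲 n)

/-- A family is closure-preserving if for every subfamily the closure of the
union is the union of the closures. -/
def ClosurePreserving (T : TopologicalSpace X) (𝒲 : Set (Set X)) : Prop :=
  letI := T
  ∀ 𝒲' ⊆ 𝒲, closure (⋃₀ 𝒲') = ⋃ W ∈ 𝒲', closure W

/-- A family is σ-closure-preserving if it is a countable union of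
closure-preserving families. -/
def SigmaClosurePreserving (T : TopologicalSpace X) (𝒱 : Set (Set X)) : Prop :=
  ∃ 𝒲 : ℕ → Set (Set X), 𝒱 = ⋃ n, 𝒲 n ∧ ∀ n, ClosurePreserving T (𝒲 n)

/-- Semi-compact: every semi-open cover has a finite subcover. -/
def SemiCompact (T : TopologicalSpace X) : Prop :=
  ∀ 𝒰 : Set (Set X), (∀ U ∈ 𝒰, SemiOpen T U) → ⋃₀ 𝒰 = univ →
    ∃ 𝒱 ⊆ 𝒰, 𝒱.Finite ∧ ⋃₀ 𝒱 = univ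

/-- S-closed: for every semi-open cover there is a finite subfamily
whose closures cover. -/
def SClosed (T : TopologicalSpace X) : Prop :=
  letI := T
  ∀ 𝒰 : Set (Set X), (∀ U ∈ 𝒰, SemiOpen T U) → ⋃₀ 𝒰 = univ →
    ∃ 𝒱 ⊆ 𝒰, 𝒱.Finite ∧ (⋃ V ∈ 𝒱, closure V) = univ

/-- s-closed: for every semi-open cover there is a finite subfamily
whose semi-closures cover. -/
def SmallSClosed (T : TopologicalSpace X) : Prop :=
  ∀ 𝒰 : Set (Set X), (∀ U ∈ 𝒰, SemiOpen T U) → ⋃₀ 𝒰 = univ →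
    ∃ 𝒱 ⊆ 𝒰, 𝒱.Finite ∧ (⋃ V ∈ 𝒱, sCl T V) = univ

/-- rc-Lindelöf: every regular closed cover has a countable subcover. -/
def RcLindelof (T : TopologicalSpace X) : Prop :=
  ∀ 𝒰 : Set (Set X), (∀ U ∈ 𝒰, RegClosed T U) → ⋃₀ 𝒰 = univ →
    ∃ 𝒱 ⊆ 𝒰, 𝒱.Countable ∧ ⋃₀ 𝒱 = univ

/-- sg-compact: every sg-open cover has a finite subcover. -/
def SgCompact (T : TopologicalSpace X) : Prop :=
  ∀ 𝒰 : Set (Set X), (∀ U ∈ 𝒰, SgOpen T U) → ⋃₀ 𝒰 = univ →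
    ∃ 𝒱 ⊆ 𝒰, 𝒱.Finite ∧ ⋃₀ 𝒱 = univ

/-- `A` is S-closed relative to `X`: every cover of `A` by semi-open sets of `X`
has a finite subfamily whose closures cover `A`. -/
def SClosedRel (T : TopologicalSpace X) (A : Set X) : Prop :=
  letI := T
  ∀ 𝒰 : Set (Set X), (∀ U ∈ 𝒰, SemiOpen T U) → A ⊆ ⋃₀ 𝒰 →
    ∃ 𝒱 ⊆ 𝒰, 𝒱.Finite ∧ A ⊆ ⋃ V ∈ 𝒱, closure V

/-- `A` is s-closed relative to `X`: every cover of `A` by semi-open sets of `X`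
has a finite subfamily whose semi-closures cover `A`. -/
def SmallSClosedRel (T : TopologicalSpace X) (A : Set X) : Prop :=
  ∀ 𝒰 : Set (Set X), (∀ U ∈ 𝒰, SemiOpen T U) → A ⊆ ⋃₀ 𝒰 →
    ∃ 𝒱 ⊆ 𝒰, 𝒱.Finite ∧ A ⊆ ⋃ V ∈ 𝒱, sCl T V

/-- Locally S-closed: every point has a neighbourhood which is S-closed relative to `X`. -/
def LocallySClosed (T : TopologicalSpace X) : Prop :=
  ∀ x : X, ∃ N ∈ @nhds X T x, SClosedRel T N

/-- Locally s-closed: every point has a neighbourhood which is s-closed relative to `X`. -/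
def LocallySmallSClosed (T : TopologicalSpace X) : Prop :=
  ∀ x : X, ∃ N ∈ @nhds X T x, SmallSClosedRel T N

/-- para-S-closed: every semi-open cover has a locally finite refinement by
semi-open sets whose union is dense. -/
def ParaSClosed (T : TopologicalSpace X) : Prop :=
  letI := T
  ∀ 𝒰 : Set (Set X), (∀ U ∈ 𝒰, SemiOpen T U) → ⋃₀ 𝒰 = univ →
    ∃ 𝒱 : Set (Set X), (∀ V ∈ 𝒱, SemiOpen T V) ∧ LocFinite T 𝒱 ∧ Refines 𝒱 𝒰 ∧
      closure (⋃₀ 𝒱) = univ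

/-- para-rc-Lindelöf: every regular closed cover has a locally countable
refinement by regular closed sets. -/
def ParaRcLindelof (T : TopologicalSpace X) : Prop :=
  ∀ 𝒰 : Set (Set X), (∀ U ∈ 𝒰, RegClosed T U) → ⋃₀ 𝒰 = univ →
    ∃ 𝒱 : Set (Set X), (∀ V ∈ 𝒱, RegClosed T V) ∧ LocCountable T 𝒱 ∧ Refines 𝒱 𝒰 ∧
      ⋃₀ 𝒱 = univ

/-- α-subparacompact: every α-open cover has a σ-discrete closed refinement covering `X`. -/
def AlphaSubparacompact (T : TopologicalSpace X) : Prop :=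
  ∀ 𝒰 : Set (Set X), (∀ U ∈ 𝒰, AlphaOpen T U) → ⋃₀ 𝒰 = univ →
    ∃ 𝒱 : Set (Set X), (∀ V ∈ 𝒱, @IsClosed X T V) ∧ SigmaDiscrete T 𝒱 ∧ Refines 𝒱 𝒰 ∧
      ⋃₀ 𝒱 = univ

/-- gα-closed: `Cl_α A ⊆ U` whenever `A ⊆ U` with `U` α-open. -/
def GAlphaClosed (T : TopologicalSpace X) (A : Set X) : Prop :=
  ∀ U : Set X, AlphaOpen T U → A ⊆ U → @closure X (alphaTop T) A ⊆ U

/-- α-paracompact: every α-open cover has a locally finite open refinement. -/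
def AlphaParacompact (T : TopologicalSpace X) : Prop :=
  ∀ 𝒰 : Set (Set X), (∀ U ∈ 𝒰, AlphaOpen T U) → ⋃₀ 𝒰 = univ →
    ∃ 𝒱 : Set (Set X), (∀ V ∈ 𝒱, T.IsOpen V) ∧ LocFinite T 𝒱 ∧ Refines 𝒱 𝒰 ∧
      ⋃₀ 𝒱 = univ

/-!
`A ↦ Cl A` turns a locally finite semi-open refinement with dense union into a locally finite
regular closed refinement covering `X` (closures of a locally finite family are locally finite
and their union is closed), and `V ↦ Int V ∩ U`, with `V ⊆ Cl U`, goes back. Passing to `𝒯^α`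
changes neither the regular closed sets nor local finiteness of families of semi-open sets:
every α-open set `o` lies in the open set `Int (Cl (Int o))`, and a semi-open set meeting the
latter already meets `o`.
-/

open Topology

def LocFiniteRegClosedRefinable (T : TopologicalSpace X) : Prop :=
  ∀ 𝒰 : Set (Set X), (∀ U ∈ 𝒰, RegClosed T U) → ⋃₀ 𝒰 = univ →
    ∃ 𝒱 : Set (Set X), (∀ V ∈ 𝒱, RegClosed T V) ∧ LocFinite T 𝒱 ∧ Refines 𝒱 𝒰 ∧ ⋃₀ 𝒱 = univ

section SemiOpen

variable [T : TopologicalSpace X] {A B U : Set X}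

theorem RegClosed.semiOpen (h : RegClosed T A) : SemiOpen T A := h.le

theorem RegClosed.isClosed (h : RegClosed T A) : IsClosed A := by
  unfold RegClosed at h
  rw [h]
  exact isClosed_closure

theorem SemiOpen.regClosed_closure (h : SemiOpen T A) : RegClosed T (closure A) :=
  subset_antisymm
    (closure_minimal (h.trans (closure_mono (interior_mono subset_closure))) isClosed_closure)
    (closure_minimal interior_subset isClosed_closure)

theorem IsOpen.semiOpen_inter (hU : IsOpen U) (hB : SemiOpen T B) : SemiOpen T (U ∩ B) := by
  have h : interior (U ∩ B) = U ∩ interior B := by rw [interior_inter, hU.interior_eq]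
  exact fun _ hx => h ▸ hU.inter_closure ⟨hx.1, hB hx.2⟩

theorem locFinite_iff_locallyFinite {𝒱 : Set (Set X)} :
    LocFinite T 𝒱 ↔ LocallyFinite ((↑) : 𝒱 → Set X) := by
  refine forall_congr' fun x => exists_congr fun N => and_congr_right fun _ => ?_
  have : {V ∈ 𝒱 | (V ∩ N).Nonempty} = (↑) '' {V : 𝒱 | ((V : Set X) ∩ N).Nonempty} := by
    ext V
    simp [and_comm]
  rw [this, finite_image_iff Subtype.val_injective.injOn]

theorem LocFinite.mono_topology {T' : TopologicalSpace X} {𝒱 : Set (Set X)} (h : LocFinite T 𝒱)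
    (hT : T' ≤ T) : LocFinite T' 𝒱 := fun x => by
  obtain ⟨N, hN, hfin⟩ := h x
  exact ⟨N, nhds_mono hT hN, hfin⟩

end SemiOpen

theorem ParaSClosed.locFiniteRegClosedRefinable [T : TopologicalSpace X] (hP : ParaSClosed T) :
    LocFiniteRegClosedRefinable T := by
  intro 𝒰 h𝒰 hcover
  obtain ⟨𝒱, h𝒱, hlf, hrefine, hdense⟩ := hP 𝒰 (fun U hU => (h𝒰 U hU).semiOpen) hcover
  have hlf' := locFinite_iff_locallyFinite.mp hlf
  refine ⟨range fun V : 𝒱 => closure (V : Set X), ?_, ?_, ?_, ?_⟩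
  · rintro _ ⟨V, rfl⟩
    exact (h𝒱 V V.2).regClosed_closure
  · exact locFinite_iff_locallyFinite.mpr hlf'.closure.on_range
  · rintro _ ⟨V, rfl⟩
    obtain ⟨U, hU, hVU⟩ := hrefine V V.2
    exact ⟨U, hU, closure_minimal hVU (h𝒰 U hU).isClosed⟩
  · rw [sUnion_range, ← hlf'.closure_iUnion, ← sUnion_eq_iUnion, hdense]

theorem LocFiniteRegClosedRefinable.paraSClosed [T : TopologicalSpace X]
    (hR : LocFiniteRegClosedRefinable T) : ParaSClosed T := by
  intro 𝒰 h𝒰 hcover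
  have hcover' : ⋃₀ (closure '' 𝒰) = univ :=
    univ_subset_iff.mp (hcover ▸ sUnion_mono_subsets fun _ => subset_closure)
  obtain ⟨𝒱, h𝒱, hlf, hrefine, h𝒱cover⟩ :=
    hR _ (by rintro _ ⟨U, hU, rfl⟩; exact (h𝒰 U hU).regClosed_closure) hcover'
  have hchoice : ∀ V : 𝒱, ∃ U ∈ 𝒰, (V : Set X) ⊆ closure U := by
    intro V
    obtain ⟨_, ⟨U, hU, rfl⟩, hVU⟩ := hrefine V V.2
    exact ⟨U, hU, hVU⟩
  choose u hu hVu using hchoice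
  set g : 𝒱 → Set X := fun V => interior V ∩ u V
  have hV_sub : ∀ V : 𝒱, (V : Set X) ⊆ closure (g V) := by
    intro V
    have hint : interior (V : Set X) ⊆ closure (g V) := fun x hx =>
      isOpen_interior.inter_closure ⟨hx, hVu V (interior_subset hx)⟩
    rw [h𝒱 V V.2]
    exact closure_minimal hint isClosed_closure
  refine ⟨range g, ?_, ?_, ?_, ?_⟩
  · rintro _ ⟨V, rfl⟩
    exact isOpen_interior.semiOpen_inter (h𝒰 _ (hu V))
  · refine locFinite_iff_locallyFinite.mpr (LocallyFinite.on_range ?_)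
    exact (locFinite_iff_locallyFinite.mp hlf).subset fun _ =>
      inter_subset_left.trans interior_subset
  · rintro _ ⟨V, rfl⟩
    exact ⟨u V, hu V, inter_subset_right⟩
  · refine univ_subset_iff.mp (h𝒱cover ▸ sUnion_subset fun V hV => ?_)
    exact (hV_sub ⟨V, hV⟩).trans (closure_mono (subset_sUnion_of_mem ⟨⟨V, hV⟩, rfl⟩))

theorem paraSClosed_iff_locFiniteRegClosedRefinable (T : TopologicalSpace X) :
    ParaSClosed T ↔ LocFiniteRegClosedRefinable T :=
  ⟨ParaSClosed.locFiniteRegClosedRefinable, LocFiniteRegClosedRefinable.paraSClosed⟩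

section AlphaTopology

variable [T : TopologicalSpace X] {A B N : Set X} {𝒱 : Set (Set X)}

theorem isOpen_alphaTop_iff : IsOpen[alphaTop T] A ↔ A ⊆ interior (closure (interior A)) :=
  Iff.rfl

theorem alphaTop_le : alphaTop T ≤ T := fun _ hU =>
  isOpen_alphaTop_iff.mpr (hU.interior_eq.symm ▸ hU.subset_interior_closure)

theorem semiOpen_of_isOpen_alphaTop (h : IsOpen[alphaTop T] A) : SemiOpen T A :=
  (isOpen_alphaTop_iff.mp h).trans interior_subset

theorem exists_mem_nhds_forall_semiOpen_inter_nonempty {x : X} (hN : N ∈ @nhds X (alphaTop T) x) :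
    ∃ G ∈ 𝓝 x, ∀ V, SemiOpen T V → (V ∩ G).Nonempty → (V ∩ N).Nonempty := by
  obtain ⟨o, hoN, ho, hxo⟩ := (@mem_nhds_iff X (alphaTop T) x N).mp hN
  refine ⟨_, isOpen_interior.mem_nhds (isOpen_alphaTop_iff.mp ho hxo), fun V hV hVG => ?_⟩
  have h₁ : (interior V ∩ interior (closure (interior o))).Nonempty :=
    (closure_inter_open_nonempty_iff isOpen_interior).mp
      (hVG.mono (inter_subset_inter_left _ hV))
  have h₂ : (interior o ∩ (interior V ∩ interior (closure (interior o)))).Nonempty :=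
    (closure_inter_open_nonempty_iff (isOpen_interior.inter isOpen_interior)).mp
      (h₁.mono fun y hy => ⟨interior_subset hy.2, hy⟩)
  obtain ⟨y, hyo, hyV, -⟩ := h₂
  exact ⟨y, interior_subset hyV, hoN (interior_subset hyo)⟩

theorem LocFinite.of_alphaTop (h𝒱 : ∀ V ∈ 𝒱, SemiOpen T V) (h : LocFinite (alphaTop T) 𝒱) :
    LocFinite T 𝒱 := fun x => by
  obtain ⟨N, hN, hfin⟩ := h x
  obtain ⟨G, hG, hGN⟩ := exists_mem_nhds_forall_semiOpen_inter_nonempty hN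
  exact ⟨G, hG, hfin.subset fun V hV => ⟨hV.1, hGN V (h𝒱 V hV.1) hV.2⟩⟩

theorem closure_alphaTop_of_semiOpen (hB : SemiOpen T B) : closure[alphaTop T] B = closure B := by
  refine subset_antisymm (closure.mono alphaTop_le) fun x hx => ?_
  refine (@mem_closure_iff_nhds X (alphaTop T) x B).mpr fun N hN => ?_
  obtain ⟨G, hG, hGN⟩ := exists_mem_nhds_forall_semiOpen_inter_nonempty hN
  rw [inter_comm]
  exact hGN B hB (inter_comm G B ▸ mem_closure_iff_nhds.mp hx G hG)

theorem closure_interior_alphaTop :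
    closure (@interior X (alphaTop T) A) = closure (interior A) := by
  refine subset_antisymm (closure_minimal ?_ isClosed_closure) (closure_mono ?_)
  · exact (isOpen_alphaTop_iff.mp (@isOpen_interior X (alphaTop T) A)).trans
      (interior_subset.trans (closure_mono (interior_mono (@interior_subset X (alphaTop T) A))))
  · exact @interior_maximal X (alphaTop T) A _ interior_subset
      (isOpen_interior.mono alphaTop_le)

theorem regClosed_alphaTop_iff : RegClosed (alphaTop T) A ↔ RegClosed T A := by
  unfold RegClosed
  rw [closure_alphaTop_of_semiOpen
    (semiOpen_of_isOpen_alphaTop (@isOpen_interior X (alphaTop T) A)), closure_interior_alphaTop]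

end AlphaTopology

theorem locFiniteRegClosedRefinable_alphaTop_iff (T : TopologicalSpace X) :
    LocFiniteRegClosedRefinable (alphaTop T) ↔ LocFiniteRegClosedRefinable T := by
  simp only [LocFiniteRegClosedRefinable, regClosed_alphaTop_iff]
  refine forall_congr' fun 𝒰 => imp_congr_right fun _ => imp_congr_right fun _ => ?_
  refine exists_congr fun 𝒱 => and_congr_right fun h𝒱 => and_congr_left' ?_
  exact ⟨LocFinite.of_alphaTop fun V hV => (h𝒱 V hV).semiOpen, (·.mono_topology alphaTop_le)⟩

/-- the four conditions on para-S-closedness of `𝒯` and `𝒯^α` are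
equivalent. -/
theorem paraSClosed_tfae (T : TopologicalSpace X) :
    List.TFAE
      [ ParaSClosed T,
        ∀ 𝒰 : Set (Set X), (∀ U ∈ 𝒰, RegClosed T U) → ⋃₀ 𝒰 = univ →
          ∃ 𝒱 : Set (Set X), (∀ V ∈ 𝒱, RegClosed T V) ∧ LocFinite T 𝒱 ∧
            Refines 𝒱 𝒰 ∧ ⋃₀ 𝒱 = univ,
        ∀ 𝒰 : Set (Set X), (∀ U ∈ 𝒰, RegClosed (alphaTop T) U) → ⋃₀ 𝒰 = univ →
          ∃ 𝒱 : Set (Set X), (∀ V ∈ 𝒱, RegClosed (alphaTop T) V) ∧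
            LocFinite (alphaTop T) 𝒱 ∧ Refines 𝒱 𝒰 ∧ ⋃₀ 𝒱 = univ,
        ParaSClosed (alphaTop T) ] := by
  tfae_have 1 ↔ 2 := paraSClosed_iff_locFiniteRegClosedRefinable T
  tfae_have 3 ↔ 2 := locFiniteRegClosedRefinable_alphaTop_iff T
  tfae_have 4 ↔ 3 := paraSClosed_iff_locFiniteRegClosedRefinable (alphaTop T)
  tfae_finish
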